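/- (Theorem 1, equation (5).) H·(1 − Σ_{n≥2} t_n·(S + S² + ⋯ + S^{n−1})) = 1, where the sum is the tsum of the summable family (t_n·Σ_{k=1}^{n−1} S^k)_{n≥2}. -/

import Mathlib

/-!
Multiplying the `n`-th term of `B = ∑_{n ≥ 2} t_n (S + ⋯ + S^{n-1})` by `S - 1` telescopes it to
`t_n (S^n - S)`, so the defining equation of `S` gives `(S - 1) B = (S - 1) - S S₁`, that is
`(S - 1)(1 - B) = S S₁`. Substituting `S - 1 = S H S₁` and cancelling `S S₁ ≠ 0` in the integral
domain `R` leaves `H (1 - B) = 1`.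
-/

noncomputable instance : TopologicalSpace (MvPowerSeries ℕ ℚ) :=
  inferInstanceAs (TopologicalSpace ((ℕ →₀ ℕ) → ℚ))

open MvPowerSeries

lemma sub_one_mul_sum_Icc_pow {A : Type*} [CommRing A] (s : A) (n : ℕ) :
    (s - 1) * ∑ k ∈ Finset.Icc 1 n, s ^ k = s ^ (n + 1) - s := by
  induction n with
  | zero => simp
  | succ n ih => rw [Finset.sum_Icc_succ_top (by omega), mul_add, ih]; ring

theorem sub_one_mul_one_sub_eq_of_hasSum {A : Type*} [CommRing A] [TopologicalSpace A]
    [IsTopologicalRing A] [T2Space A] {t : ℕ → A} {s a b : A}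
    (hs : HasSum (fun n ↦ t n * s ^ (n + 1)) (s - 1)) (ha : HasSum t a)
    (hb : HasSum (fun n ↦ t (n + 1) * ∑ k ∈ Finset.Icc 1 (n + 1), s ^ k) b) :
    (s - 1) * (1 - b) = s * a := by
  have hb₀ : HasSum (fun n ↦ t n * ∑ k ∈ Finset.Icc 1 n, s ^ k) b :=
    (hasSum_nat_add_iff' 1).mp (by simpa using hb)
  have h₁ : HasSum (fun n ↦ t n * (s ^ (n + 1) - s)) ((s - 1) * b) := by
    simpa only [mul_left_comm (s - 1), sub_one_mul_sum_Icc_pow] using hb₀.mul_left (s - 1)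
  have h₂ : HasSum (fun n ↦ t n * (s ^ (n + 1) - s)) (s - 1 - s * a) := by
    simpa only [mul_sub, mul_comm s] using hs.sub (ha.mul_left s)
  linear_combination h₂.unique h₁

namespace MvPowerSeries

open scoped WithPiTopology

variable {σ ι R : Type*} [Semiring R] [TopologicalSpace R]

lemma summable_X_mul {e : ι → σ} (he : e.Injective) (f : ι → MvPowerSeries σ R) :
    Summable fun i ↦ X (e i) * f i := by
  rw [WithPiTopology.summable_iff_summable_coeff]
  refine fun d ↦ summable_of_hasFiniteSupport <|
    (d.hasFiniteSupport.preimage he.injOn).subset fun i hi ↦ ?_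
  by_contra hd
  exact hi <| X_dvd_iff.mp (dvd_mul_right _ _) d (Function.notMem_support.mp hd)

lemma coeff_single_of_hasSum_X [T2Space R] {e : ι → σ} (he : e.Injective)
    {a : MvPowerSeries σ R} (h : HasSum (fun i ↦ X (e i)) a) (i : ι) :
    coeff (Finsupp.single (e i) 1) a = 1 := by
  classical
  refine (WithPiTopology.hasSum_iff_hasSum_coeff.mp h _).unique ?_
  simp_rw [coeff_X, Finsupp.single_left_inj one_ne_zero, he.eq_iff]
  simpa only [eq_comm] using hasSum_ite_eq i (1 : R)

end MvPowerSeries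

instance : IsTopologicalRing (MvPowerSeries ℕ ℚ) :=
  MvPowerSeries.WithPiTopology.instIsTopologicalRing ℕ ℚ

instance : T2Space (MvPowerSeries ℕ ℚ) :=
  MvPowerSeries.WithPiTopology.instT2Space

/-- (Theorem 1, equation (5).) `H · (1 − ∑_{n ≥ 2} t_n · (S + S² + ⋯ + S^{n-1})) = 1`,
where the sum is the tsum of the family `(t_n · ∑_{k=1}^{n-1} S^k)_{n ≥ 2}`
(here reindexed by `n ↦ n + 2`). -/
theorem geode_stmt6 (S G H : MvPowerSeries ℕ ℚ)
    (hS : S = 1 + ∑' n : ℕ, (X (n + 1) : MvPowerSeries ℕ ℚ) * S ^ (n + 1))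
    (hG : S - 1 = G * ∑' n : ℕ, (X (n + 1) : MvPowerSeries ℕ ℚ))
    (hH : G = S * H) :
    H * (1 - ∑' n : ℕ, (X (n + 2) : MvPowerSeries ℕ ℚ) *
      ∑ k ∈ Finset.Icc 1 (n + 1), S ^ k) = 1 := by
  have summable (j : ℕ) (g : ℕ → MvPowerSeries ℕ ℚ) :
      Summable fun n ↦ (X (n + j) : MvPowerSeries ℕ ℚ) * g n :=
    summable_X_mul (add_left_injective j) g
  have hS₁ : HasSum (fun n ↦ (X (n + 1) : MvPowerSeries ℕ ℚ)) (∑' n, X (n + 1)) := by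
    simpa using (summable 1 1).hasSum
  have hS_sub_one : HasSum (fun n ↦ (X (n + 1) : MvPowerSeries ℕ ℚ) * S ^ (n + 1)) (S - 1) := by
    rw [sub_eq_iff_eq_add'.mpr hS]
    exact (summable 1 _).hasSum
  have key := sub_one_mul_one_sub_eq_of_hasSum hS_sub_one hS₁ (summable 2 _).hasSum
  have hS_ne : S ≠ 0 := by
    rintro rfl
    simp at hS
  have hS₁_ne : ∑' n, (X (n + 1) : MvPowerSeries ℕ ℚ) ≠ 0 := fun h ↦ by
    simpa [h] using coeff_single_of_hasSum_X (add_left_injective 1) hS₁ 0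
  rw [hG, hH] at key
  refine mul_left_cancel₀ (mul_ne_zero hS_ne hS₁_ne) ?_
  linear_combination key
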